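/- arXiv:2306.00619 — 2 statements merged into one kernel-verified Lean document; each statement's English description precedes it below -/
import Mathlib

section
/- Suppose B_f^ν is irreducible and ρ((D_f^ν)⁻¹ B_f^ν) > 1 for both ν = 1 and ν = 2, and let z^{1*} ≫ 0 and z^{2*} ≫ 0 be equilibria of the single-virus counterparts of virus 1 and virus 2 respectively (such equilibria exist). If s(−D_f^1 + (I − Z(z^{2*})) B_f^1) > 0 and s(−D_f^2 + (I − Z(z^{1*})) B_f^2) > 0, then the bi-virus higher-order SIWS model has a coexisting equilibrium (ẑ^1, ẑ^2) with ẑ^1 ≫ 0, ẑ^2 ≫ 0, and ẑ^1_i + ẑ^2_i ≤ 1 for every i ≤ n. -/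
open Matrix Filter Topology MeasureTheory

noncomputable section

/-- `Z(z) = diag(z_1,…,z_n,0,…,0)`. -/
def Zmat (n : ℕ) {N : ℕ} (z : Fin N → ℝ) : Matrix (Fin N) (Fin N) ℝ :=
  Matrix.diagonal fun i => if (i : ℕ) < n then z i else 0

/-- `H(z)_i = zᵀ B_{fi} z`. -/
def Hquad {N : ℕ} (Bfi : Fin N → Matrix (Fin N) (Fin N) ℝ) (z : Fin N → ℝ) : Fin N → ℝ :=
  fun i => z ⬝ᵥ (Bfi i).mulVec z

/-- The higher-order SIWS vector field `G(z) = -D_f z + (I - Z(z)) (B_f z + H(z))`. -/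
def Gfield (n : ℕ) {N : ℕ} (Df Bf : Matrix (Fin N) (Fin N) ℝ)
    (Bfi : Fin N → Matrix (Fin N) (Fin N) ℝ) (z : Fin N → ℝ) : Fin N → ℝ :=
  -(Df.mulVec z) + (1 - Zmat n z).mulVec (Bf.mulVec z + Hquad Bfi z)

/-- Upper bound vector: `1` on the first `n` coordinates, `w_{j,max}` on the rest. -/
def ubound (n : ℕ) {N : ℕ} (Df Bf : Matrix (Fin N) (Fin N) ℝ)
    (Bfi : Fin N → Matrix (Fin N) (Fin N) ℝ) (i : Fin N) : ℝ :=
  if (i : ℕ) < n then 1 else (∑ q, Bf i q + ∑ p, ∑ q, Bfi i p q) / Df i i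

/-- The closed domain `D̄`. -/
def Dbar (n : ℕ) {N : ℕ} (Df Bf : Matrix (Fin N) (Fin N) ℝ)
    (Bfi : Fin N → Matrix (Fin N) (Fin N) ℝ) : Set (Fin N → ℝ) :=
  {z | ∀ i, 0 ≤ z i ∧ z i ≤ ubound n Df Bf Bfi i}

/-- The open domain `𝐃`. -/
def Dint (n : ℕ) {N : ℕ} (Df Bf : Matrix (Fin N) (Fin N) ℝ)
    (Bfi : Fin N → Matrix (Fin N) (Fin N) ℝ) : Set (Fin N → ℝ) :=
  {z | ∀ i, 0 < z i ∧ z i < ubound n Df Bf Bfi i}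

/-- A solution of `z' = G(z)` on `[0,∞)`. -/
def IsSolution {N : ℕ} (G : (Fin N → ℝ) → (Fin N → ℝ)) (z : ℝ → Fin N → ℝ) : Prop :=
  ∀ t : ℝ, 0 ≤ t → HasDerivAt z (G (z t)) t

/-- Irreducibility of a (nonnegative) square matrix. -/
def Irred {N : ℕ} (M : Matrix (Fin N) (Fin N) ℝ) : Prop :=
  ∀ i j : Fin N, i ≠ j → ∃ (r : ℕ) (k : ℕ → Fin N),
    k 0 = i ∧ k r = j ∧ ∀ s, s < r → 0 < M (k s) (k (s + 1))

/-- Spectral radius: maximum modulus of the complex eigenvalues. -/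
def specRad {N : ℕ} (M : Matrix (Fin N) (Fin N) ℝ) : ℝ :=
  sSup {r : ℝ | ∃ μ : ℂ, (M.map fun x : ℝ => (x : ℂ)).charpoly.IsRoot μ ∧ r = ‖μ‖}

/-- Spectral abscissa: maximum real part of the complex eigenvalues. -/
def specAbs {N : ℕ} (M : Matrix (Fin N) (Fin N) ℝ) : ℝ :=
  sSup {r : ℝ | ∃ μ : ℂ, (M.map fun x : ℝ => (x : ℂ)).charpoly.IsRoot μ ∧ r = μ.re}

/-- A matrix is Hurwitz if every eigenvalue has negative real part. -/
def IsHurwitz {N : ℕ} (M : Matrix (Fin N) (Fin N) ℝ) : Prop :=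
  ∀ μ : ℂ, (M.map fun x : ℝ => (x : ℂ)).charpoly.IsRoot μ → μ.re < 0

/-- Euclidean norm on `ℝ^N`. -/
def eucNorm {N : ℕ} (v : Fin N → ℝ) : ℝ := Real.sqrt (∑ i, v i ^ 2)

/-- Euclidean norm on a pair of vectors (concatenation). -/
def eucNorm2 {N : ℕ} (v w : Fin N → ℝ) : ℝ := Real.sqrt (∑ i, v i ^ 2 + ∑ i, w i ^ 2)

/-- Jacobian matrix of a vector field at a point. -/
def jacobian {N : ℕ} (G : (Fin N → ℝ) → (Fin N → ℝ)) (z : Fin N → ℝ) :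
    Matrix (Fin N) (Fin N) ℝ :=
  Matrix.of fun i j => fderiv ℝ G z (Pi.single j 1) i

/-- Structural hypotheses of the higher-order SIWS model. -/
structure ModelHyp (n : ℕ) {N : ℕ} (Df Bf : Matrix (Fin N) (Fin N) ℝ)
    (Bfi : Fin N → Matrix (Fin N) (Fin N) ℝ) : Prop where
  dDiag : ∀ i j, i ≠ j → Df i j = 0
  dPos : ∀ i, 0 < Df i i
  bNonneg : ∀ p q, 0 ≤ Bf p q
  bBlock : ∀ p q : Fin N, n ≤ (p : ℕ) → n ≤ (q : ℕ) → Bf p q = 0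
  bfiNonneg : ∀ i p q, 0 ≤ Bfi i p q
  bfiBlock1 : ∀ i : Fin N, (i : ℕ) < n → ∀ p q : Fin N, n ≤ (p : ℕ) → n ≤ (q : ℕ) →
    Bfi i p q = 0
  bfiBlock2 : ∀ i : Fin N, n ≤ (i : ℕ) → ∀ p q : Fin N, ¬((p : ℕ) < n ∧ (q : ℕ) < n) →
    Bfi i p q = 0

/-- Bi-virus vector field for one virus:
`G^ν(z, zo) = -D_f^ν z + (I - Z(z) - Z(zo)) (B_f^ν z + H^ν(z))`. -/
def GBi (n : ℕ) {N : ℕ} (Df Bf : Matrix (Fin N) (Fin N) ℝ)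
    (Bfi : Fin N → Matrix (Fin N) (Fin N) ℝ) (z zo : Fin N → ℝ) : Fin N → ℝ :=
  -(Df.mulVec z) + (1 - Zmat n z - Zmat n zo).mulVec (Bf.mulVec z + Hquad Bfi z)

/-- A solution of the bi-virus dynamics on `[0,∞)`. -/
def IsSolutionBi (n : ℕ) {N : ℕ} (Df1 Bf1 : Matrix (Fin N) (Fin N) ℝ)
    (Bfi1 : Fin N → Matrix (Fin N) (Fin N) ℝ) (Df2 Bf2 : Matrix (Fin N) (Fin N) ℝ)
    (Bfi2 : Fin N → Matrix (Fin N) (Fin N) ℝ) (z1 z2 : ℝ → Fin N → ℝ) : Prop :=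
  ∀ t : ℝ, 0 ≤ t →
    HasDerivAt z1 (GBi n Df1 Bf1 Bfi1 (z1 t) (z2 t)) t ∧
    HasDerivAt z2 (GBi n Df2 Bf2 Bfi2 (z2 t) (z1 t)) t

/-- Membership in the bi-virus domain `D̄_bi`. -/
def InDbarBi (n : ℕ) {N : ℕ} (Df1 Bf1 : Matrix (Fin N) (Fin N) ℝ)
    (Bfi1 : Fin N → Matrix (Fin N) (Fin N) ℝ) (Df2 Bf2 : Matrix (Fin N) (Fin N) ℝ)
    (Bfi2 : Fin N → Matrix (Fin N) (Fin N) ℝ) (z1 z2 : Fin N → ℝ) : Prop :=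
  z1 ∈ Dbar n Df1 Bf1 Bfi1 ∧ z2 ∈ Dbar n Df2 Bf2 Bfi2 ∧
    ∀ i : Fin N, (i : ℕ) < n → z1 i + z2 i ≤ 1

/-- The vector `𝟙` : first `n` coordinates equal `1`, the rest `0`. -/
def onevec (n : ℕ) {N : ℕ} : Fin N → ℝ := fun i => if (i : ℕ) < n then 1 else 0

/-- The general SIWS vector field. -/
def Ggen (n : ℕ) {N : ℕ} (Df : Matrix (Fin N) (Fin N) ℝ)
    (F H : (Fin N → ℝ) → (Fin N → ℝ)) (z : Fin N → ℝ) : Fin N → ℝ := fun i =>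
  if (i : ℕ) < n then -(Df i i * z i) + (1 - z i) * (F z i + H z i)
  else -(Df i i * z i) + (F z i + H z i)

/-- Upper bound vector for the general SIWS model. -/
def uboundGen (n : ℕ) {N : ℕ} (Df : Matrix (Fin N) (Fin N) ℝ)
    (F H : (Fin N → ℝ) → (Fin N → ℝ)) (i : Fin N) : ℝ :=
  if (i : ℕ) < n then 1 else (F (onevec n) i + H (onevec n) i) / Df i i

def DbarGen (n : ℕ) {N : ℕ} (Df : Matrix (Fin N) (Fin N) ℝ)
    (F H : (Fin N → ℝ) → (Fin N → ℝ)) : Set (Fin N → ℝ) :=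
  {z | ∀ i, 0 ≤ z i ∧ z i ≤ uboundGen n Df F H i}

def DintGen (n : ℕ) {N : ℕ} (Df : Matrix (Fin N) (Fin N) ℝ)
    (F H : (Fin N → ℝ) → (Fin N → ℝ)) : Set (Fin N → ℝ) :=
  {z | ∀ i, 0 < z i ∧ z i < uboundGen n Df F H i}

/-- Structural hypotheses of the general SIWS model. -/
structure GenHyp (n : ℕ) {N : ℕ} (Df : Matrix (Fin N) (Fin N) ℝ)
    (F H : (Fin N → ℝ) → (Fin N → ℝ)) : Prop where
  dDiag : ∀ i j, i ≠ j → Df i j = 0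
  dPos : ∀ i, 0 < Df i i
  fSmooth : ContDiff ℝ 1 F
  hSmooth : ContDiff ℝ 1 H
  fZero : F 0 = 0
  hZero : H 0 = 0
  fDep : ∀ i : Fin N, n ≤ (i : ℕ) → ∀ z z' : Fin N → ℝ,
    (∀ j : Fin N, (j : ℕ) < n → z j = z' j) → F z i = F z' i
  hDep : ∀ i : Fin N, n ≤ (i : ℕ) → ∀ z z' : Fin N → ℝ,
    (∀ j : Fin N, (j : ℕ) < n → z j = z' j) → H z i = H z' i
  fMono : ∀ (z : Fin N → ℝ) (i j : Fin N), 0 ≤ fderiv ℝ F z (Pi.single j 1) i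
  hMono : ∀ (z : Fin N → ℝ) (i j : Fin N), 0 ≤ fderiv ℝ H z (Pi.single j 1) i
  hJacZero : fderiv ℝ H 0 = 0
  edgeHyp : ∃ E : Set (Fin N × Fin N),
    (∀ e ∈ E, e.1 ≠ e.2) ∧
    (∀ i j : Fin N, i ≠ j → ∃ (r : ℕ) (k : ℕ → Fin N),
      k 0 = i ∧ k r = j ∧ ∀ s, s < r → (k s, k (s + 1)) ∈ E) ∧
    (∀ (z : Fin N → ℝ), ∀ e ∈ E, 0 < fderiv ℝ F z (Pi.single e.2 1) e.1)

/-- The perturbed SIWS vector field `G_ε(z) = -D_f z + (I - Z(z)) (B_f z + ε H(z))`. -/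
def Gpert (n : ℕ) {N : ℕ} (Df Bf : Matrix (Fin N) (Fin N) ℝ)
    (H : (Fin N → ℝ) → (Fin N → ℝ)) (ε : ℝ) (z : Fin N → ℝ) : Fin N → ℝ :=
  -(Df.mulVec z) + (1 - Zmat n z).mulVec (Bf.mulVec z + ε • H z)

/-!
Freezing the other virus at `w`, the `i`-th equilibrium equation
`D_ii z_i = (1 - z_i - w_i) g_i(z)`, `g = B_f z + H(z)`, solved for the `z_i` outside `g`, reads
`z = T(w, z)` with `T` increasing in `z` and decreasing in `w`. Each single-virus equilibrium is
an upper corner, `T^ν(w, z^{ν*}) ≤ z^{ν*}`. Since `-D^1 + (I - Z(z^{2*})) B^1` is Metzler, the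
moduli `a¹` of an eigenvector for an eigenvalue of positive real part form a sub-eigenvector,
which makes `ε a¹` a lower corner for small `ε`; likewise for virus 2. So
`(z¹, z²) ↦ (T¹(z², z¹), T²(z¹, z²))` is a monotone self-map of the box
`[ε a¹, z^{1*}] × [ε a², z^{2*}]` ordered with the second factor reversed, and Knaster–Tarski
gives an equilibrium. The bound `z¹_i + z²_i ≤ 1` is built into `T`, and positivity spreads
along the edges of the irreducible `B^ν`.
-/

open Set

theorem exists_fixedPoint_of_mixedMonotoneOn {α β : Type*} [ConditionallyCompleteLattice α]
    [ConditionallyCompleteLattice β] {a₁ b₁ : α} {a₂ b₂ : β} (h₁ : a₁ ≤ b₁) (h₂ : a₂ ≤ b₂)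
    (f : α → β → α) (g : β → α → β)
    (hf : ∀ z ∈ Icc a₁ b₁, ∀ z' ∈ Icc a₁ b₁, ∀ w ∈ Icc a₂ b₂, ∀ w' ∈ Icc a₂ b₂,
      z ≤ z' → w' ≤ w → f z w ≤ f z' w')
    (hg : ∀ w ∈ Icc a₂ b₂, ∀ w' ∈ Icc a₂ b₂, ∀ z ∈ Icc a₁ b₁, ∀ z' ∈ Icc a₁ b₁,
      w ≤ w' → z' ≤ z → g w z ≤ g w' z')
    (hfa : a₁ ≤ f a₁ b₂) (hfb : f b₁ a₂ ≤ b₁) (hga : a₂ ≤ g a₂ b₁) (hgb : g b₂ a₁ ≤ b₂) :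
    ∃ z ∈ Icc a₁ b₁, ∃ w ∈ Icc a₂ b₂, f z w = z ∧ g w z = w := by
  have : Fact (a₁ ≤ b₁) := ⟨h₁⟩
  have : Fact (a₂ ≤ b₂) := ⟨h₂⟩
  have ha₁ := left_mem_Icc.2 h₁
  have hb₁ := right_mem_Icc.2 h₁
  have ha₂ := left_mem_Icc.2 h₂
  have hb₂ := right_mem_Icc.2 h₂
  have hf' (z : Icc a₁ b₁) (w : Icc a₂ b₂) : f z w ∈ Icc a₁ b₁ :=
    ⟨hfa.trans (hf _ ha₁ _ z.2 _ hb₂ _ w.2 z.2.1 w.2.2),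
      (hf _ z.2 _ hb₁ _ w.2 _ ha₂ z.2.2 w.2.1).trans hfb⟩
  have hg' (w : Icc a₂ b₂) (z : Icc a₁ b₁) : g w z ∈ Icc a₂ b₂ :=
    ⟨hga.trans (hg _ ha₂ _ w.2 _ hb₁ _ z.2 w.2.1 z.2.2),
      (hg _ w.2 _ hb₂ _ z.2 _ ha₁ w.2.2 z.2.1).trans hgb⟩
  let Φ : Icc a₁ b₁ × (Icc a₂ b₂)ᵒᵈ →o Icc a₁ b₁ × (Icc a₂ b₂)ᵒᵈ :=
    { toFun := fun p => (⟨f p.1 (OrderDual.ofDual p.2).1, hf' _ _⟩,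
        OrderDual.toDual ⟨g (OrderDual.ofDual p.2).1 p.1, hg' _ _⟩)
      monotone' := fun p q hpq =>
        ⟨hf _ p.1.2 _ q.1.2 _ (OrderDual.ofDual p.2).2 _ (OrderDual.ofDual q.2).2 hpq.1 hpq.2,
          hg _ (OrderDual.ofDual q.2).2 _ (OrderDual.ofDual p.2).2 _ q.1.2 _ p.1.2 hpq.2 hpq.1⟩ }
  obtain ⟨⟨z, w⟩, hfix⟩ : ∃ p, Φ p = p := ⟨_, Φ.map_lfp⟩
  exact ⟨z, z.2, (OrderDual.ofDual w).1, (OrderDual.ofDual w).2,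
    congrArg (fun p => (p.1 : α)) hfix,
    congrArg (fun p : Icc a₁ b₁ × (Icc a₂ b₂)ᵒᵈ => ((OrderDual.ofDual p.2).1 : β)) hfix⟩

theorem Matrix.mulVec_mono_of_nonneg {m k R : Type*} [Fintype k] [Semiring R] [PartialOrder R]
    [IsOrderedRing R] {B : Matrix m k R} (hB : ∀ i j, 0 ≤ B i j) {v w : k → R} (h : v ≤ w) :
    B *ᵥ v ≤ B *ᵥ w :=
  fun i => Finset.sum_le_sum fun j _ => mul_le_mul_of_nonneg_left (h j) (hB i j)

theorem div_add_le_div_add {d x y : ℝ} (hd : 0 < d) (hx : 0 ≤ x) (hxy : x ≤ y) :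
    x / (d + x) ≤ y / (d + y) := by
  rw [div_le_div_iff₀ (by linarith) (by linarith)]
  nlinarith

theorem Irred.forall_pos {N : ℕ} {B : Matrix (Fin N) (Fin N) ℝ} (hB : Irred B) {z : Fin N → ℝ}
    (hpos : ∃ j, 0 < z j) (hadj : ∀ i j, 0 < B i j → 0 < z j → 0 < z i) (i : Fin N) :
    0 < z i := by
  obtain ⟨j, hj⟩ := hpos
  rcases eq_or_ne i j with rfl | hij
  · exact hj
  obtain ⟨r, k, hk0, hkr, hkB⟩ := hB i j hij
  have hback : ∀ s ≤ r, 0 < z (k (r - s)) := by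
    intro s
    induction s with
    | zero => simpa [hkr] using hj
    | succ s ih =>
      intro hs
      refine hadj _ _ (hkB (r - (s + 1)) (by omega)) ?_
      rw [show r - (s + 1) + 1 = r - s by omega]
      exact ih (by omega)
  simpa [hk0] using hback r le_rfl

theorem exists_nonneg_re_smul_le_mulVec {ι : Type*} [Fintype ι] [DecidableEq ι]
    {A : Matrix ι ι ℝ} (hA : ∀ i j, i ≠ j → 0 ≤ A i j) {μ : ℂ}
    (hμ : (A.map ((↑) : ℝ → ℂ)).charpoly.IsRoot μ) :
    ∃ a : ι → ℝ, 0 ≤ a ∧ a ≠ 0 ∧ μ.re • a ≤ A *ᵥ a := by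
  obtain ⟨v, hv0, hv⟩ : ∃ v, v ≠ 0 ∧ (scalar ι μ - A.map ((↑) : ℝ → ℂ)) *ᵥ v = 0 :=
    Matrix.exists_mulVec_eq_zero_iff.2 (by rw [← eval_charpoly]; exact hμ)
  refine ⟨fun i => ‖v i‖, fun i => norm_nonneg _, fun h => hv0 (funext fun i => ?_), fun i => ?_⟩
  · simpa using congrFun h i
  have hev : μ * v i = ∑ j, (A i j : ℂ) * v j := by
    rw [sub_mulVec, sub_eq_zero] at hv
    have := congrFun hv i
    rw [scalar_apply, mulVec_diagonal] at this
    simpa [mulVec, dotProduct] using this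
  have hrow : (μ - A i i) * v i = ∑ j ∈ Finset.univ.erase i, (A i j : ℂ) * v j := by
    rw [sub_mul, hev, ← Finset.add_sum_erase _ _ (Finset.mem_univ i), add_sub_cancel_left]
  calc μ.re * ‖v i‖ = (μ - A i i).re * ‖v i‖ + A i i * ‖v i‖ := by simp; ring
    _ ≤ ‖(μ - A i i) * v i‖ + A i i * ‖v i‖ := by
      rw [norm_mul]; gcongr; exact Complex.re_le_norm _
    _ ≤ ∑ j ∈ Finset.univ.erase i, A i j * ‖v j‖ + A i i * ‖v i‖ := by
      rw [hrow]
      gcongr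
      refine (norm_sum_le _ _).trans (Finset.sum_le_sum fun j hj => ?_)
      rw [norm_mul, Complex.norm_real,
        Real.norm_of_nonneg (hA i j (Finset.ne_of_mem_erase hj).symm)]
    _ = (A *ᵥ fun j => ‖v j‖) i := by
      show _ = ∑ j, A i j * ‖v j‖
      rw [add_comm, Finset.add_sum_erase _ (fun j => A i j * ‖v j‖) (Finset.mem_univ i)]

theorem exists_pos_smul_le_mulVec_of_specAbs_pos {N : ℕ} {A : Matrix (Fin N) (Fin N) ℝ}
    (hA : ∀ i j, i ≠ j → 0 ≤ A i j) (hs : 0 < specAbs A) :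
    ∃ r : ℝ, 0 < r ∧ ∃ a : Fin N → ℝ, 0 ≤ a ∧ a ≠ 0 ∧ r • a ≤ A *ᵥ a := by
  obtain ⟨μ, hμ, hre⟩ : ∃ μ : ℂ, (A.map ((↑) : ℝ → ℂ)).charpoly.IsRoot μ ∧ 0 < μ.re := by
    by_contra! h
    exact hs.not_ge (Real.sSup_nonpos fun _ ⟨μ, hμ, hr⟩ => hr ▸ h μ hμ)
  exact ⟨μ.re, hre, exists_nonneg_re_smul_le_mulVec hA hμ⟩

theorem Hquad_zero {N : ℕ} (Bfi : Fin N → Matrix (Fin N) (Fin N) ℝ) : Hquad Bfi 0 = 0 := by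
  ext i
  simp [Hquad]

theorem Hquad_mono {N : ℕ} {Bfi : Fin N → Matrix (Fin N) (Fin N) ℝ}
    (hBfi : ∀ i p q, 0 ≤ Bfi i p q) {z z' : Fin N → ℝ} (hz : 0 ≤ z) (h : z ≤ z') :
    Hquad Bfi z ≤ Hquad Bfi z' := fun i => by
  have hBz : 0 ≤ Bfi i *ᵥ z := by simpa using mulVec_mono_of_nonneg (hBfi i) hz
  simp only [Hquad, dotProduct]
  exact Finset.sum_le_sum fun p _ =>
    mul_le_mul (h p) (mulVec_mono_of_nonneg (hBfi i) h p) (hBz p) ((hz p).trans (h p))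

namespace SIWS

variable {n N : ℕ}

def pressure (Bf : Matrix (Fin N) (Fin N) ℝ) (Bfi : Fin N → Matrix (Fin N) (Fin N) ℝ)
    (z : Fin N → ℝ) : Fin N → ℝ :=
  Bf *ᵥ z + Hquad Bfi z

def coexistStep (n : ℕ) (Df Bf : Matrix (Fin N) (Fin N) ℝ)
    (Bfi : Fin N → Matrix (Fin N) (Fin N) ℝ) (w z : Fin N → ℝ) : Fin N → ℝ := fun i =>
  if (i : ℕ) < n then (1 - w i) * (pressure Bf Bfi z i / (Df i i + pressure Bf Bfi z i))
  else pressure Bf Bfi z i / Df i i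

theorem Zmat_zero : Zmat n (0 : Fin N → ℝ) = 0 := by
  simp [Zmat]

theorem Zmat_add (z w : Fin N → ℝ) : Zmat n (z + w) = Zmat n z + Zmat n w := by
  simp only [Zmat, diagonal_add]
  congr 1
  ext i
  split_ifs <;> simp

theorem one_sub_Zmat_mulVec_apply (w v : Fin N → ℝ) (i : Fin N) :
    ((1 - Zmat n w) *ᵥ v) i = if (i : ℕ) < n then (1 - w i) * v i else v i := by
  simp only [sub_mulVec, one_mulVec, Pi.sub_apply, Zmat, mulVec_diagonal]
  split_ifs <;> ring

theorem GBi_zero_right (Df Bf : Matrix (Fin N) (Fin N) ℝ)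
    (Bfi : Fin N → Matrix (Fin N) (Fin N) ℝ) (z : Fin N → ℝ) :
    GBi n Df Bf Bfi z 0 = Gfield n Df Bf Bfi z := by
  simp [GBi, Gfield, Zmat_zero]

variable {Df Bf : Matrix (Fin N) (Fin N) ℝ} {Bfi : Fin N → Matrix (Fin N) (Fin N) ℝ}

theorem _root_.ModelHyp.Df_mulVec_apply (hM : ModelHyp n Df Bf Bfi) (z : Fin N → ℝ) (i : Fin N) :
    (Df *ᵥ z) i = Df i i * z i := by
  rw [mulVec, dotProduct,
    Finset.sum_eq_single i (fun j _ hj => by rw [hM.dDiag i j hj.symm, zero_mul]) (by simp)]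

theorem pressure_mono (hM : ModelHyp n Df Bf Bfi) {z z' : Fin N → ℝ} (hz : 0 ≤ z) (h : z ≤ z') :
    pressure Bf Bfi z ≤ pressure Bf Bfi z' :=
  add_le_add (mulVec_mono_of_nonneg hM.bNonneg h) (Hquad_mono hM.bfiNonneg hz h)

theorem pressure_nonneg (hM : ModelHyp n Df Bf Bfi) {z : Fin N → ℝ} (hz : 0 ≤ z) :
    0 ≤ pressure Bf Bfi z := by
  simpa [pressure, Hquad_zero] using pressure_mono hM le_rfl hz

theorem GBi_apply (hM : ModelHyp n Df Bf Bfi) (z w : Fin N → ℝ) (i : Fin N) :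
    GBi n Df Bf Bfi z w i = -(Df i i * z i) +
      if (i : ℕ) < n then (1 - (z i + w i)) * pressure Bf Bfi z i else pressure Bf Bfi z i := by
  rw [GBi, sub_sub, ← Zmat_add, Pi.add_apply, Pi.neg_apply, hM.Df_mulVec_apply,
    one_sub_Zmat_mulVec_apply]
  rfl

theorem GBi_eq_zero_iff (hM : ModelHyp n Df Bf Bfi) {z w : Fin N → ℝ} (hz : 0 ≤ z) :
    GBi n Df Bf Bfi z w = 0 ↔ coexistStep n Df Bf Bfi w z = z := by
  simp only [funext_iff, Pi.zero_apply]
  refine forall_congr' fun i => ?_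
  have hg : 0 ≤ pressure Bf Bfi z i := pressure_nonneg hM hz i
  have hD := hM.dPos i
  rw [GBi_apply hM, coexistStep]
  split_ifs
  · rw [mul_div_assoc', div_eq_iff (by linarith)]
    constructor <;> intro h <;> linarith
  · rw [div_eq_iff hD.ne']
    constructor <;> intro h <;> linarith

theorem coexistStep_mono (hM : ModelHyp n Df Bf Bfi) {z z' w w' : Fin N → ℝ}
    (hw : ∀ i : Fin N, (i : ℕ) < n → w i ≤ 1) (hz : 0 ≤ z) (hzz : z ≤ z') (hww : w' ≤ w) :
    coexistStep n Df Bf Bfi w z ≤ coexistStep n Df Bf Bfi w' z' := by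
  intro i
  have hg := pressure_mono hM hz hzz i
  have hg0 : 0 ≤ pressure Bf Bfi z i := pressure_nonneg hM hz i
  have hD := hM.dPos i
  simp only [coexistStep]
  split_ifs with hi
  · exact mul_le_mul (by linarith [hww i]) (div_add_le_div_add hD hg0 hg)
      (div_nonneg hg0 (by linarith)) (by linarith [hw i hi, hww i])
  · exact div_le_div_of_nonneg_right hg hD.le

theorem add_lt_one_of_coexistStep_eq (hM : ModelHyp n Df Bf Bfi) {z w : Fin N → ℝ} (hz : 0 ≤ z)
    (hfix : coexistStep n Df Bf Bfi w z = z) {i : Fin N} (hi : (i : ℕ) < n) (hw : w i < 1) :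
    z i + w i < 1 := by
  have hg : 0 ≤ pressure Bf Bfi z i := pressure_nonneg hM hz i
  have hD := hM.dPos i
  have hlt : pressure Bf Bfi z i / (Df i i + pressure Bf Bfi z i) < 1 :=
    (div_lt_one (by linarith)).2 (by linarith)
  have := congrFun hfix i
  simp only [coexistStep, if_pos hi] at this
  nlinarith

theorem lt_one_of_coexistStep_zero_eq (hM : ModelHyp n Df Bf Bfi) {u : Fin N → ℝ} (hu : 0 ≤ u)
    (hfix : coexistStep n Df Bf Bfi 0 u = u) {i : Fin N} (hi : (i : ℕ) < n) : u i < 1 := by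
  simpa using add_lt_one_of_coexistStep_eq hM hu hfix hi one_pos

theorem coexistStep_pos (hM : ModelHyp n Df Bf Bfi) {z w : Fin N → ℝ} (hz : 0 ≤ z)
    (hw : ∀ i : Fin N, (i : ℕ) < n → w i < 1) {i j : Fin N} (hij : 0 < Bf i j) (hzj : 0 < z j) :
    0 < coexistStep n Df Bf Bfi w z i := by
  have hBz : Bf i j * z j ≤ (Bf *ᵥ z) i :=
    Finset.single_le_sum (f := fun k => Bf i k * z k)
      (fun k _ => mul_nonneg (hM.bNonneg i k) (hz k)) (Finset.mem_univ j)
  have hH : 0 ≤ Hquad Bfi z i := by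
    simpa [Hquad_zero] using Hquad_mono hM.bfiNonneg le_rfl hz i
  have hg : 0 < pressure Bf Bfi z i :=
    add_pos_of_pos_of_nonneg ((mul_pos hij hzj).trans_le hBz) hH
  have hD := hM.dPos i
  simp only [coexistStep]
  split_ifs with hi
  · exact mul_pos (by linarith [hw i hi]) (div_pos hg (by linarith))
  · exact div_pos hg hD

theorem pos_of_coexistStep_eq (hM : ModelHyp n Df Bf Bfi) (hirr : Irred Bf) {z w : Fin N → ℝ}
    (hz : 0 ≤ z) (hz0 : ∃ j, 0 < z j) (hw : ∀ i : Fin N, (i : ℕ) < n → w i < 1)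
    (hfix : coexistStep n Df Bf Bfi w z = z) (i : Fin N) : 0 < z i :=
  hirr.forall_pos hz0 (fun i _ hij hzj => congrFun hfix i ▸ coexistStep_pos hM hz hw hij hzj) i

theorem smul_le_coexistStep_smul (hM : ModelHyp n Df Bf Bfi) {w a : Fin N → ℝ} {r ε : ℝ}
    (hw : ∀ i : Fin N, (i : ℕ) < n → w i ≤ 1) (ha : 0 ≤ a) (hr : 0 ≤ r)
    (hsub : r • a ≤ (-Df + (1 - Zmat n w) * Bf) *ᵥ a) (hε : 0 ≤ ε)
    (hεr : ∀ i, ε * (Bf *ᵥ a) i ≤ r) :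
    ε • a ≤ coexistStep n Df Bf Bfi w (ε • a) := by
  intro i
  have hb : 0 ≤ (Bf *ᵥ a) i := by simpa using mulVec_mono_of_nonneg hM.bNonneg ha i
  have hg : ε * (Bf *ᵥ a) i ≤ pressure Bf Bfi (ε • a) i := by
    have := Hquad_mono hM.bfiNonneg le_rfl (smul_nonneg hε ha) i
    simp only [pressure, Pi.add_apply, mulVec_smul, Pi.smul_apply, smul_eq_mul, Hquad_zero,
      Pi.zero_apply] at this ⊢
    linarith
  have hD := hM.dPos i
  have key := hsub i
  rw [add_mulVec, neg_mulVec, ← mulVec_mulVec, Pi.add_apply, Pi.neg_apply, hM.Df_mulVec_apply,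
    one_sub_Zmat_mulVec_apply, Pi.smul_apply, smul_eq_mul] at key
  have hεb := mul_le_mul_of_nonneg_left (hεr i) (mul_nonneg hε (ha i))
  simp only [coexistStep, Pi.smul_apply, smul_eq_mul]
  split_ifs at key ⊢ with hi
  · have hεkey := mul_le_mul_of_nonneg_left key hε
    calc ε * a i ≤ (1 - w i) * (ε * (Bf *ᵥ a) i / (Df i i + ε * (Bf *ᵥ a) i)) := by
          rw [mul_div_assoc', le_div_iff₀ (by positivity)]
          nlinarith
      _ ≤ _ := mul_le_mul_of_nonneg_left (div_add_le_div_add hD (by positivity) hg)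
          (by linarith [hw i hi])
  · rw [le_div_iff₀ hD]
    nlinarith [mul_le_mul_of_nonneg_left key hε, mul_nonneg hr (mul_nonneg hε (ha i))]

theorem exists_le_coexistStep (hM : ModelHyp n Df Bf Bfi) {w u : Fin N → ℝ}
    (hw : ∀ i : Fin N, (i : ℕ) < n → w i ≤ 1)
    (hs : 0 < specAbs (-Df + (1 - Zmat n w) * Bf)) (hu : ∀ i, 0 < u i) :
    ∃ lo, 0 ≤ lo ∧ (∃ i, 0 < lo i) ∧ lo ≤ u ∧ lo ≤ coexistStep n Df Bf Bfi w lo := by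
  have hMetzler : ∀ i j, i ≠ j → 0 ≤ (-Df + (1 - Zmat n w) * Bf) i j := by
    intro i j hij
    have hrow : ((1 - Zmat n w) * Bf) i j = (if (i : ℕ) < n then 1 - w i else 1) * Bf i j := by
      simp only [sub_mul, one_mul, Zmat, Matrix.sub_apply, diagonal_mul]
      split_ifs <;> ring
    rw [Matrix.add_apply, Matrix.neg_apply, hM.dDiag i j hij, neg_zero, zero_add, hrow]
    split_ifs with hi
    · exact mul_nonneg (by linarith [hw i hi]) (hM.bNonneg i j)
    · simpa using hM.bNonneg i j
  obtain ⟨r, hr, a, ha, ha0, hsub⟩ := exists_pos_smul_le_mulVec_of_specAbs_pos hMetzler hs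
  have small (b p : ℝ) (hp : 0 < p) : ∀ᶠ ε in 𝓝 (0 : ℝ), ε * b < p :=
    (continuous_id.mul continuous_const).continuousAt.eventually_lt continuousAt_const
      (by simpa using hp)
  obtain ⟨ε, hεs, hε⟩ := (((eventually_all.2 fun i => (small _ _ (hu i)).and
    (small ((Bf *ᵥ a) i) _ hr)).filter_mono nhdsWithin_le_nhds).and
      (self_mem_nhdsWithin : Ioi (0 : ℝ) ∈ 𝓝[>] 0)).exists
  obtain ⟨i, hi⟩ := Function.ne_iff.1 ha0
  exact ⟨ε • a, smul_nonneg (le_of_lt hε) ha, ⟨i, mul_pos hε ((ha i).lt_of_ne' hi)⟩,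
    fun j => (hεs j).1.le,
    smul_le_coexistStep_smul hM hw ha hr.le hsub (le_of_lt hε) fun j => (hεs j).2.le⟩

theorem exists_coexistStep_fixedPoint {Df₁ Bf₁ Df₂ Bf₂ : Matrix (Fin N) (Fin N) ℝ}
    {Bfi₁ Bfi₂ : Fin N → Matrix (Fin N) (Fin N) ℝ}
    (hM₁ : ModelHyp n Df₁ Bf₁ Bfi₁) (hM₂ : ModelHyp n Df₂ Bf₂ Bfi₂) {lo₁ u₁ lo₂ u₂ : Fin N → ℝ}
    (hlo₁ : 0 ≤ lo₁) (hlo₂ : 0 ≤ lo₂) (hlu₁ : lo₁ ≤ u₁) (hlu₂ : lo₂ ≤ u₂)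
    (hu₁ : coexistStep n Df₁ Bf₁ Bfi₁ 0 u₁ = u₁) (hu₂ : coexistStep n Df₂ Bf₂ Bfi₂ 0 u₂ = u₂)
    (hsub₁ : lo₁ ≤ coexistStep n Df₁ Bf₁ Bfi₁ u₂ lo₁)
    (hsub₂ : lo₂ ≤ coexistStep n Df₂ Bf₂ Bfi₂ u₁ lo₂) :
    ∃ z₁ ∈ Icc lo₁ u₁, ∃ z₂ ∈ Icc lo₂ u₂,
      coexistStep n Df₁ Bf₁ Bfi₁ z₂ z₁ = z₁ ∧ coexistStep n Df₂ Bf₂ Bfi₂ z₁ z₂ = z₂ := by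
  have hlt₁ : ∀ i : Fin N, (i : ℕ) < n → u₁ i ≤ 1 := fun i hi =>
    (lt_one_of_coexistStep_zero_eq hM₁ (hlo₁.trans hlu₁) hu₁ hi).le
  have hlt₂ : ∀ i : Fin N, (i : ℕ) < n → u₂ i ≤ 1 := fun i hi =>
    (lt_one_of_coexistStep_zero_eq hM₂ (hlo₂.trans hlu₂) hu₂ hi).le
  refine exists_fixedPoint_of_mixedMonotoneOn hlu₁ hlu₂
    (fun z w => coexistStep n Df₁ Bf₁ Bfi₁ w z) (fun w z => coexistStep n Df₂ Bf₂ Bfi₂ z w)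
    ?_ ?_ hsub₁ ?_ hsub₂ ?_
  · intro z hz z' _ w hw w' _ hzz hww
    exact coexistStep_mono hM₁ (fun i hi => (hw.2 i).trans (hlt₂ i hi)) (hlo₁.trans hz.1) hzz hww
  · intro w hw w' _ z hz z' _ hww hzz
    exact coexistStep_mono hM₂ (fun i hi => (hz.2 i).trans (hlt₁ i hi)) (hlo₂.trans hw.1) hww hzz
  · exact (coexistStep_mono hM₁ (fun i hi => (hlu₂ i).trans (hlt₂ i hi)) (hlo₁.trans hlu₁) le_rfl
      hlo₂).trans_eq hu₁
  · exact (coexistStep_mono hM₂ (fun i hi => (hlu₁ i).trans (hlt₁ i hi)) (hlo₂.trans hlu₂) le_rfl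
      hlo₁).trans_eq hu₂

end SIWS

theorem stmt14_general (n m : ℕ)
    (Df1 Bf1 : Matrix (Fin (n + m)) (Fin (n + m)) ℝ)
    (Bfi1 : Fin (n + m) → Matrix (Fin (n + m)) (Fin (n + m)) ℝ)
    (Df2 Bf2 : Matrix (Fin (n + m)) (Fin (n + m)) ℝ)
    (Bfi2 : Fin (n + m) → Matrix (Fin (n + m)) (Fin (n + m)) ℝ)
    (hmod1 : ModelHyp n Df1 Bf1 Bfi1) (hmod2 : ModelHyp n Df2 Bf2 Bfi2)
    (hirr1 : Irred Bf1) (hirr2 : Irred Bf2)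
    (z1s z2s : Fin (n + m) → ℝ)
    (h1pos : ∀ i, 0 < z1s i) (h2pos : ∀ i, 0 < z2s i)
    (h1eq : Gfield n Df1 Bf1 Bfi1 z1s = 0) (h2eq : Gfield n Df2 Bf2 Bfi2 z2s = 0)
    (hs1 : 0 < specAbs (-Df1 + (1 - Zmat n z2s) * Bf1))
    (hs2 : 0 < specAbs (-Df2 + (1 - Zmat n z1s) * Bf2)) :
    ∃ zh1 zh2 : Fin (n + m) → ℝ,
      (∀ i, 0 < zh1 i) ∧ (∀ i, 0 < zh2 i) ∧
      (∀ i : Fin (n + m), (i : ℕ) < n → zh1 i + zh2 i ≤ 1) ∧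
      GBi n Df1 Bf1 Bfi1 zh1 zh2 = 0 ∧ GBi n Df2 Bf2 Bfi2 zh2 zh1 = 0 := by
  have hfix1 : SIWS.coexistStep n Df1 Bf1 Bfi1 0 z1s = z1s :=
    (SIWS.GBi_eq_zero_iff hmod1 fun i => (h1pos i).le).1 (by rwa [SIWS.GBi_zero_right])
  have hfix2 : SIWS.coexistStep n Df2 Bf2 Bfi2 0 z2s = z2s :=
    (SIWS.GBi_eq_zero_iff hmod2 fun i => (h2pos i).le).1 (by rwa [SIWS.GBi_zero_right])
  have hlt1 : ∀ i : Fin (n + m), (i : ℕ) < n → z1s i < 1 := fun i =>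
    SIWS.lt_one_of_coexistStep_zero_eq hmod1 (fun j => (h1pos j).le) hfix1
  have hlt2 : ∀ i : Fin (n + m), (i : ℕ) < n → z2s i < 1 := fun i =>
    SIWS.lt_one_of_coexistStep_zero_eq hmod2 (fun j => (h2pos j).le) hfix2
  obtain ⟨lo1, hlo1, ⟨j1, hj1⟩, hlu1, hsub1⟩ :=
    SIWS.exists_le_coexistStep hmod1 (fun i hi => (hlt2 i hi).le) hs1 h1pos
  obtain ⟨lo2, hlo2, ⟨j2, hj2⟩, hlu2, hsub2⟩ :=
    SIWS.exists_le_coexistStep hmod2 (fun i hi => (hlt1 i hi).le) hs2 h2pos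
  obtain ⟨zh1, hzh1, zh2, hzh2, heq1, heq2⟩ :=
    SIWS.exists_coexistStep_fixedPoint hmod1 hmod2 hlo1 hlo2 hlu1 hlu2 hfix1 hfix2 hsub1 hsub2
  have hnn1 : 0 ≤ zh1 := hlo1.trans hzh1.1
  have hnn2 : 0 ≤ zh2 := hlo2.trans hzh2.1
  have hlt1' : ∀ i : Fin (n + m), (i : ℕ) < n → zh1 i < 1 := fun i hi =>
    (hzh1.2 i).trans_lt (hlt1 i hi)
  have hlt2' : ∀ i : Fin (n + m), (i : ℕ) < n → zh2 i < 1 := fun i hi =>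
    (hzh2.2 i).trans_lt (hlt2 i hi)
  exact ⟨zh1, zh2,
    SIWS.pos_of_coexistStep_eq hmod1 hirr1 hnn1 ⟨j1, hj1.trans_le (hzh1.1 j1)⟩ hlt2' heq1,
    SIWS.pos_of_coexistStep_eq hmod2 hirr2 hnn2 ⟨j2, hj2.trans_le (hzh2.1 j2)⟩ hlt1' heq2,
    fun i hi => (SIWS.add_lt_one_of_coexistStep_eq hmod1 hnn1 heq1 hi (hlt2' i hi)).le,
    (SIWS.GBi_eq_zero_iff hmod1 hnn1).2 heq1, (SIWS.GBi_eq_zero_iff hmod2 hnn2).2 heq2⟩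

/-- existence of a coexisting equilibrium of the bi-virus
higher-order SIWS model. -/
theorem stmt14 (n m : ℕ) (hn : 0 < n)
    (Df1 Bf1 : Matrix (Fin (n + m)) (Fin (n + m)) ℝ)
    (Bfi1 : Fin (n + m) → Matrix (Fin (n + m)) (Fin (n + m)) ℝ)
    (Df2 Bf2 : Matrix (Fin (n + m)) (Fin (n + m)) ℝ)
    (Bfi2 : Fin (n + m) → Matrix (Fin (n + m)) (Fin (n + m)) ℝ)
    (hmod1 : ModelHyp n Df1 Bf1 Bfi1) (hmod2 : ModelHyp n Df2 Bf2 Bfi2)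
    (hirr1 : Irred Bf1) (hirr2 : Irred Bf2)
    (hr1 : 1 < specRad (Df1⁻¹ * Bf1)) (hr2 : 1 < specRad (Df2⁻¹ * Bf2))
    (z1s z2s : Fin (n + m) → ℝ)
    (h1pos : ∀ i, 0 < z1s i) (h2pos : ∀ i, 0 < z2s i)
    (h1eq : Gfield n Df1 Bf1 Bfi1 z1s = 0) (h2eq : Gfield n Df2 Bf2 Bfi2 z2s = 0)
    (hs1 : 0 < specAbs (-Df1 + (1 - Zmat n z2s) * Bf1))
    (hs2 : 0 < specAbs (-Df2 + (1 - Zmat n z1s) * Bf2)) :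
    ∃ zh1 zh2 : Fin (n + m) → ℝ,
      (∀ i, 0 < zh1 i) ∧ (∀ i, 0 < zh2 i) ∧
      (∀ i : Fin (n + m), (i : ℕ) < n → zh1 i + zh2 i ≤ 1) ∧
      GBi n Df1 Bf1 Bfi1 zh1 zh2 = 0 ∧ GBi n Df2 Bf2 Bfi2 zh2 zh1 = 0 :=
  stmt14_general n m Df1 Bf1 Bfi1 Df2 Bf2 Bfi2 hmod1 hmod2 hirr1 hirr2 z1s z2s h1pos h2pos h1eq h2eq
    hs1 hs2
end
end

section
/- Consider the general SIWS model. Then: (i) every solution with z(0) ∈ D̄ satisfies z(t) ∈ D̄ for all t ≥ 0; (ii) every solution with z(0) ∈ 𝐃 satisfies z(t) ∈ 𝐃 for all t ≥ 0; (iii) G(0) = 0, and every equilibrium belonging to D̄ but not to 𝐃 is equal to 0. -/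
open Matrix Filter Topology MeasureTheory

noncomputable section

/-!
The box `D̄` is forward invariant because the field points into it on every face: at `z_i = 0`
it equals `F_i + H_i ≥ 0` (monotonicity and `F 0 = H 0 = 0`), at `z_i = 1` it equals
`-(D_f)_ii`, and at `z_{n+j} = w_{j,max}` it is `(F + H)(z) - (F + H)(𝟙) ≤ 0`. As `G` is `C¹`,
hence Lipschitz on bounded sets, the squared distance `W` to the box satisfies `W' ≤ K W` along a
solution, and Grönwall gives `W ≡ 0`. Along a solution in `D̄`, both `z_i` and `u_i - z_i`, with
`u` the upper corner of `D̄`, satisfy `f' ≥ -K f`, so they stay positive if they start so.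

An equilibrium with `z_i = 0` has `F_i(z) = 0`, which forces `z_j = 0` along every edge `(i, j)`;
strong connectivity spreads this to all coordinates. No equilibrium has `z_i = 1` for `i ≤ n`, so
at `z_{n+j} = w_{j,max}` an edge leaving `n+j`, which must enter the first `n` coordinates, makes
`(F + H)(z)` strictly smaller than `(F + H)(𝟙)`, contradicting `G_{n+j}(z) = 0`.
-/

open Set

section Calculus

variable {ι : Type*} [Fintype ι] [DecidableEq ι]

theorem ContinuousLinearMap.apply_apply_eq_sum {κ : Type*} (L : (ι → ℝ) →L[ℝ] (κ → ℝ))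
    (v : ι → ℝ) (i : κ) : L v i = ∑ j, v j * L (Pi.single j 1) i := by
  conv_lhs => rw [← Finset.univ_sum_single v, map_sum, Finset.sum_apply]
  refine Finset.sum_congr rfl fun j _ => ?_
  rw [← mul_one (v j), ← smul_eq_mul, Pi.single_smul', map_smul]
  simp

theorem exists_apply_sub_apply_eq_sum_mul_fderiv {F : (ι → ℝ) → (ι → ℝ)}
    (hF : Differentiable ℝ F) (a b : ι → ℝ) (i : ι) :
    ∃ p, F b i - F a i = ∑ j, (b j - a j) * fderiv ℝ F p (Pi.single j 1) i := by
  have hg : ∀ s : ℝ, HasDerivAt (fun s : ℝ => F (a + s • (b - a)) i)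
      (fderiv ℝ F (a + s • (b - a)) (b - a) i) s := fun s => by
    have hline : HasDerivAt (fun s : ℝ => a + s • (b - a)) (b - a) s := by
      simpa using ((hasDerivAt_id s).smul_const (b - a)).const_add a
    exact hasDerivAt_pi.1 ((hF _).hasFDerivAt.comp_hasDerivAt s hline) i
  obtain ⟨c, -, hc⟩ := exists_hasDerivAt_eq_slope _ _ zero_lt_one
    (fun s _ => (hg s).continuousAt.continuousWithinAt) fun s _ => hg s
  refine ⟨a + c • (b - a), ?_⟩
  simp only [← Pi.sub_apply b a, ← (fderiv ℝ F _).apply_apply_eq_sum, hc]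
  simp

theorem monotone_of_fderiv_nonneg {F : (ι → ℝ) → (ι → ℝ)} (hF : Differentiable ℝ F)
    (hF' : ∀ p i j, 0 ≤ fderiv ℝ F p (Pi.single j 1) i) : Monotone F := by
  intro a b hab i
  obtain ⟨p, hp⟩ := exists_apply_sub_apply_eq_sum_mul_fderiv hF a b i
  have : 0 ≤ F b i - F a i := hp ▸ Finset.sum_nonneg fun j _ =>
    mul_nonneg (sub_nonneg.2 (hab j)) (hF' p i j)
  linarith

theorem apply_lt_apply_of_fderiv_pos {F : (ι → ℝ) → (ι → ℝ)} (hF : Differentiable ℝ F)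
    (hF' : ∀ p i j, 0 ≤ fderiv ℝ F p (Pi.single j 1) i) {a b : ι → ℝ} (hab : a ≤ b)
    {i j : ι} (hj : a j < b j) (hpos : ∀ p, 0 < fderiv ℝ F p (Pi.single j 1) i) :
    F a i < F b i := by
  obtain ⟨p, hp⟩ := exists_apply_sub_apply_eq_sum_mul_fderiv hF a b i
  have : 0 < F b i - F a i := hp ▸ Finset.sum_pos'
    (fun k _ => mul_nonneg (sub_nonneg.2 (hab k)) (hF' p i k))
    ⟨j, Finset.mem_univ j, mul_pos (sub_pos.2 hj) (hpos p)⟩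
  linarith

theorem hasDerivAt_sq_max_zero (x : ℝ) :
    HasDerivAt (fun y : ℝ => max y 0 ^ 2) (2 * max x 0) x := by
  have off_zero : ∀ y ≠ (0 : ℝ), HasDerivAt (fun y : ℝ => max y 0 ^ 2) (2 * max y 0) y := by
    intro y hy
    rcases hy.lt_or_gt with hy | hy
    · refine (hasDerivAt_const y (0 : ℝ)).congr_of_eventuallyEq ?_ |>.congr_deriv
        (by simp [hy.le])
      filter_upwards [eventually_lt_nhds hy] with w hw
      simp [hw.le]
    · refine (hasDerivAt_pow 2 y).congr_of_eventuallyEq ?_ |>.congr_deriv (by simp [hy.le])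
      filter_upwards [eventually_gt_nhds hy] with w hw
      simp [hw.le]
  rcases eq_or_ne x 0 with rfl | hx
  · exact hasDerivAt_of_hasDerivAt_of_ne (g := fun y : ℝ => 2 * max y 0) off_zero
      (by fun_prop) (by fun_prop)
  · exact off_zero x hx

end Calculus

section Invariance

open scoped NNReal

variable {ι : Type*} [Fintype ι]

theorem hasDerivAt_sq_sub_clamp {a b : ℝ} (hab : a ≤ b) (x : ℝ) :
    HasDerivAt (fun y : ℝ => (y - max a (min y b)) ^ 2) (2 * (x - max a (min x b))) x := by
  have hsplit : ∀ y : ℝ, (y - max a (min y b)) ^ 2 = max (y - b) 0 ^ 2 + max (a - y) 0 ^ 2 := by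
    intro y
    simp only [max_def, min_def]
    split_ifs <;> nlinarith
  have hupper := (hasDerivAt_sq_max_zero (x - b)).comp x ((hasDerivAt_id x).sub_const b)
  have hlower := (hasDerivAt_sq_max_zero (a - x)).comp x ((hasDerivAt_id x).const_sub a)
  refine ((hupper.add hlower).congr_deriv ?_).congr_of_eventuallyEq
    (Eventually.of_forall hsplit)
  simp only [max_def, min_def]
  split_ifs <;> linarith

theorem sq_norm_le_sum_sq (v : ι → ℝ) : ‖v‖ ^ 2 ≤ ∑ i, v i ^ 2 := by
  refine Real.le_sqrt (norm_nonneg v) (Finset.sum_nonneg fun i _ => sq_nonneg _) |>.1 ?_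
  refine (pi_norm_le_iff_of_nonneg (Real.sqrt_nonneg _)).2 fun i => ?_
  rw [Real.norm_eq_abs]
  exact Real.abs_le_sqrt (Finset.single_le_sum (f := fun j => v j ^ 2)
    (fun j _ => sq_nonneg _) (Finset.mem_univ i))

variable {G : (ι → ℝ) → ι → ℝ} {lo hi : ι → ℝ}

theorem sum_sub_clamp_mul_le_of_inward (hlo : ∀ x ∈ Icc lo hi, ∀ i, x i = lo i → 0 ≤ G x i)
    (hhi : ∀ x ∈ Icc lo hi, ∀ i, x i = hi i → G x i ≤ 0) (hlohi : lo ≤ hi)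
    {s : Set (ι → ℝ)} {L : ℝ≥0} (hL : LipschitzOnWith L G s) {x : ι → ℝ} (hx : x ∈ s)
    (hpx : lo ⊔ x ⊓ hi ∈ s) :
    ∑ i, (x i - (lo ⊔ x ⊓ hi) i) * G x i
      ≤ Fintype.card ι * L * ∑ i, (x i - (lo ⊔ x ⊓ hi) i) ^ 2 := by
  set p := lo ⊔ x ⊓ hi
  have hp : p ∈ Icc lo hi := ⟨le_sup_left, sup_le hlohi inf_le_right⟩
  have hGp : ‖G x - G p‖ ≤ L * ‖x - p‖ := by
    simpa only [dist_eq_norm] using hL.dist_le_mul x hx p hpx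
  -- The projection `p` moves `x` only in coordinates where the field points back into the box.
  have hsign : ∀ i, (x i - p i) * G p i ≤ 0 := by
    intro i
    rcases lt_trichotomy (x i) (p i) with h | h | h
    · have hpi : p i = lo i := by
        simp only [p, Pi.sup_apply, Pi.inf_apply, max_def, min_def] at h ⊢
        split_ifs at h ⊢ <;> linarith
      exact mul_nonpos_of_nonpos_of_nonneg (by linarith) (hlo p hp i hpi)
    · simp [h]
    · have hpi : p i = hi i := by
        simp only [p, Pi.sup_apply, Pi.inf_apply, max_def, min_def] at h ⊢
        split_ifs at h ⊢ <;> linarith [hlohi i]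
      exact mul_nonpos_of_nonneg_of_nonpos (by linarith) (hhi p hp i hpi)
  have hterm : ∀ i, (x i - p i) * G x i ≤ L * ‖x - p‖ ^ 2 := by
    intro i
    have hdi : |x i - p i| ≤ ‖x - p‖ := norm_le_pi_norm (x - p) i
    have hGi : |G x i - G p i| ≤ ‖G x - G p‖ := norm_le_pi_norm (G x - G p) i
    calc (x i - p i) * G x i = (x i - p i) * G p i + (x i - p i) * (G x i - G p i) := by ring
      _ ≤ |x i - p i| * |G x i - G p i| := by
          linarith [hsign i, le_abs_self ((x i - p i) * (G x i - G p i)),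
            abs_mul (x i - p i) (G x i - G p i)]
      _ ≤ ‖x - p‖ * (L * ‖x - p‖) :=
          mul_le_mul hdi (hGi.trans hGp) (abs_nonneg _) (norm_nonneg _)
      _ = L * ‖x - p‖ ^ 2 := by ring
  calc ∑ i, (x i - p i) * G x i ≤ ∑ _i : ι, L * ‖x - p‖ ^ 2 :=
        Finset.sum_le_sum fun i _ => hterm i
    _ = Fintype.card ι * L * ‖x - p‖ ^ 2 := by simp [mul_assoc]
    _ ≤ Fintype.card ι * L * ∑ i, (x i - p i) ^ 2 := by
        gcongr
        exact sq_norm_le_sum_sq (x - p)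

theorem mem_Icc_of_hasDerivAt_of_inward (hlo : ∀ x ∈ Icc lo hi, ∀ i, x i = lo i → 0 ≤ G x i)
    (hhi : ∀ x ∈ Icc lo hi, ∀ i, x i = hi i → G x i ≤ 0) (hlohi : lo ≤ hi)
    (hG : LocallyLipschitz G) {z : ℝ → ι → ℝ} (hz : ∀ t, 0 ≤ t → HasDerivAt z (G (z t)) t)
    (hz0 : z 0 ∈ Icc lo hi) {T : ℝ} (hT : 0 ≤ T) : z T ∈ Icc lo hi := by
  set p : (ι → ℝ) → ι → ℝ := fun x => lo ⊔ x ⊓ hi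
  set W : (ι → ℝ) → ℝ := fun x => ∑ i, (x i - p x i) ^ 2
  have hp0 : p (z 0) = z 0 := by simp only [p, inf_eq_left.2 hz0.2, sup_eq_right.2 hz0.1]
  have hzc : ContinuousOn z (Icc 0 T) := fun t ht => (hz t ht.1).continuousAt.continuousWithinAt
  obtain ⟨a, ha⟩ := (isCompact_Icc.image_of_continuousOn hzc).isBounded.bddBelow
  obtain ⟨b, hb⟩ := (isCompact_Icc.image_of_continuousOn hzc).isBounded.bddAbove
  set B := Icc (a ⊓ lo) (b ⊔ hi)
  have hzB : ∀ t ∈ Icc 0 T, z t ∈ B := fun t ht =>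
    ⟨inf_le_left.trans (ha ⟨t, ht, rfl⟩), (hb ⟨t, ht, rfl⟩).trans le_sup_left⟩
  have hpB : ∀ x, p x ∈ B := fun x =>
    ⟨inf_le_right.trans le_sup_left, (sup_le hlohi inf_le_right).trans le_sup_right⟩
  obtain ⟨L, hL⟩ := hG.locallyLipschitzOn.exists_lipschitzOnWith_of_compact (s := B)
    isCompact_Icc
  have hW' : ∀ t, 0 ≤ t → HasDerivAt (fun t => W (z t))
      (∑ i, 2 * (z t i - p (z t) i) * G (z t) i) t := fun t ht =>
    HasDerivAt.fun_sum fun i _ =>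
      (hasDerivAt_sq_sub_clamp (hlohi i) _).comp t (hasDerivAt_pi.1 (hz t ht) i)
  have hbound : ∀ t ∈ Ico 0 T, ∑ i, 2 * (z t i - p (z t) i) * G (z t) i
      ≤ 2 * Fintype.card ι * L * W (z t) + 0 := fun t ht => by
    have := sum_sub_clamp_mul_le_of_inward hlo hhi hlohi hL (hzB t (Ico_subset_Icc_self ht))
      (hpB (z t))
    simp only [mul_assoc, ← Finset.mul_sum] at this ⊢
    linarith
  have hWT := le_gronwallBound_of_liminf_deriv_right_le (δ := 0)
    (fun t ht => (hW' t ht.1).continuousAt.continuousWithinAt)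
    (fun t ht r hr => (hW' t ht.1).hasDerivWithinAt.liminf_right_slope_le hr)
    (by simp [W, hp0]) hbound T ⟨hT, le_rfl⟩
  rw [gronwallBound_ε0_δ0] at hWT
  have hzero := (Finset.sum_eq_zero_iff_of_nonneg fun i _ => sq_nonneg _).1
    (le_antisymm hWT (Finset.sum_nonneg fun i _ => sq_nonneg _))
  have hfix : z T = p (z T) := funext fun i =>
    sub_eq_zero.1 (pow_eq_zero_iff two_ne_zero |>.1 (hzero i (Finset.mem_univ i)))
  exact hfix ▸ ⟨le_sup_left, sup_le hlohi inf_le_right⟩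

end Invariance

theorem pos_of_neg_mul_le_deriv {f f' : ℝ → ℝ} {K a b : ℝ} (hab : a ≤ b)
    (hf : ∀ t ∈ Icc a b, HasDerivAt f (f' t) t) (bound : ∀ t ∈ Icc a b, -(K * f t) ≤ f' t)
    (ha : 0 < f a) : 0 < f b := by
  have hneg := le_gronwallBound_of_liminf_deriv_right_le (f := fun t => -f t)
    (f' := fun t => -f' t) (δ := -f a) (K := -K) (ε := 0)
    (fun t ht => (hf t ht).neg.continuousAt.continuousWithinAt)
    (fun t ht r hr =>
      (hf t (Ico_subset_Icc_self ht)).neg.hasDerivWithinAt.liminf_right_slope_le hr)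
    le_rfl (fun t ht => by linarith [bound t (Ico_subset_Icc_self ht)]) b ⟨hab, le_rfl⟩
  rw [gronwallBound_ε0] at hneg
  nlinarith [Real.exp_pos (-K * (b - a))]

theorem apply_of_path {α : Type*} {E : Set (α × α)} {P : α → Prop}
    (hE : ∀ i j, (i, j) ∈ E → P i → P j) {k : ℕ → α} {r : ℕ}
    (hk : ∀ s, s < r → (k s, k (s + 1)) ∈ E) (h0 : P (k 0)) : P (k r) := by
  induction r with
  | zero => exact h0
  | succ r ih =>
    exact hE _ _ (hk r r.lt_succ_self) (ih fun s hs => hk s (hs.trans r.lt_succ_self))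

section SIWS

variable {n N : ℕ} {Df : Matrix (Fin N) (Fin N) ℝ} {F H : (Fin N → ℝ) → (Fin N → ℝ)}
  {z : Fin N → ℝ} {i : Fin N}

theorem Ggen_of_lt (hi : (i : ℕ) < n) :
    Ggen n Df F H z i = -(Df i i * z i) + (1 - z i) * (F z i + H z i) := if_pos hi

theorem Ggen_of_le (hi : n ≤ (i : ℕ)) :
    Ggen n Df F H z i = -(Df i i * z i) + (F z i + H z i) := if_neg (not_lt.2 hi)

theorem uboundGen_of_lt (hi : (i : ℕ) < n) : uboundGen n Df F H i = 1 := if_pos hi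

theorem DbarGen_eq_Icc : DbarGen n Df F H = Icc 0 (uboundGen n Df F H) := by
  ext z
  simp [DbarGen, Pi.le_def, forall_and]

theorem DintGen_subset_DbarGen : DintGen n Df F H ⊆ DbarGen n Df F H :=
  fun _ hz i => ⟨(hz i).1.le, (hz i).2.le⟩

theorem le_one_of_mem_DbarGen (hz : z ∈ DbarGen n Df F H) (hi : (i : ℕ) < n) : z i ≤ 1 :=
  uboundGen_of_lt (Df := Df) (F := F) (H := H) hi ▸ (hz i).2

def fillOnes (n : ℕ) (z : Fin N → ℝ) : Fin N → ℝ := fun j => if (j : ℕ) < n then 1 else z j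

theorem le_fillOnes (hz : ∀ j : Fin N, (j : ℕ) < n → z j ≤ 1) : z ≤ fillOnes n z := by
  intro j
  by_cases hj : (j : ℕ) < n <;> simp [fillOnes, hj, hz j]

namespace GenHyp

theorem differentiable_F (h : GenHyp n Df F H) : Differentiable ℝ F :=
  h.fSmooth.differentiable one_ne_zero

theorem monotone_F (h : GenHyp n Df F H) : Monotone F :=
  monotone_of_fderiv_nonneg h.differentiable_F h.fMono

theorem monotone_H (h : GenHyp n Df F H) : Monotone H :=
  monotone_of_fderiv_nonneg (h.hSmooth.differentiable one_ne_zero) h.hMono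

theorem monotone_add (h : GenHyp n Df F H) : Monotone (F + H) :=
  h.monotone_F.add h.monotone_H

theorem add_apply_nonneg (h : GenHyp n Df F H) (hz : 0 ≤ z) (i : Fin N) : 0 ≤ F z i + H z i := by
  simpa [h.fZero, h.hZero] using h.monotone_add hz i

theorem add_apply_fillOnes (h : GenHyp n Df F H) (hi : n ≤ (i : ℕ)) (z : Fin N → ℝ) :
    F (fillOnes n z) i + H (fillOnes n z) i = F (onevec n) i + H (onevec n) i := by
  have hagree : ∀ j : Fin N, (j : ℕ) < n → fillOnes n z j = onevec n j := fun j hj => by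
    simp [fillOnes, onevec, hj]
  rw [h.fDep i hi _ _ hagree, h.hDep i hi _ _ hagree]

theorem add_apply_le_onevec (h : GenHyp n Df F H) (hi : n ≤ (i : ℕ))
    (hz : ∀ j : Fin N, (j : ℕ) < n → z j ≤ 1) :
    F z i + H z i ≤ F (onevec n) i + H (onevec n) i :=
  h.add_apply_fillOnes hi z ▸ h.monotone_add (le_fillOnes hz) i

theorem mul_uboundGen_of_le (h : GenHyp n Df F H) (hi : n ≤ (i : ℕ)) :
    Df i i * uboundGen n Df F H i = F (onevec n) i + H (onevec n) i := by
  rw [uboundGen, if_neg (not_lt.2 hi), mul_div_cancel₀ _ (h.dPos i).ne']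

theorem uboundGen_nonneg (h : GenHyp n Df F H) : 0 ≤ uboundGen n Df F H := by
  intro i
  by_cases hi : (i : ℕ) < n
  · simp [uboundGen_of_lt hi]
  · refine (mul_nonneg_iff_of_pos_left (h.dPos i)).1 ?_
    rw [h.mul_uboundGen_of_le (not_lt.1 hi)]
    exact h.add_apply_nonneg (fun j => by unfold onevec; split_ifs <;> norm_num) i

theorem Ggen_zero (h : GenHyp n Df F H) : Ggen n Df F H 0 = 0 := by
  funext i
  simp [Ggen, h.fZero, h.hZero]

theorem contDiff_Ggen (h : GenHyp n Df F H) : ContDiff ℝ 1 (Ggen n Df F H) := by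
  have hF := h.fSmooth
  have hH := h.hSmooth
  refine contDiff_pi.2 fun i => ?_
  unfold Ggen
  split_ifs <;> fun_prop

theorem Ggen_nonneg_of_eq_zero (h : GenHyp n Df F H) (hz : 0 ≤ z) (hzi : z i = 0) :
    0 ≤ Ggen n Df F H z i := by
  by_cases hi : (i : ℕ) < n
  · simpa [Ggen_of_lt hi, hzi] using h.add_apply_nonneg hz i
  · simpa [Ggen_of_le (not_lt.1 hi), hzi] using h.add_apply_nonneg hz i

theorem Ggen_neg_of_eq_one (h : GenHyp n Df F H) (hi : (i : ℕ) < n) (hzi : z i = 1) :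
    Ggen n Df F H z i < 0 := by
  simpa [Ggen_of_lt hi, hzi] using h.dPos i

theorem Ggen_nonpos_of_eq_uboundGen (h : GenHyp n Df F H) (hz : z ∈ DbarGen n Df F H)
    (hzi : z i = uboundGen n Df F H i) : Ggen n Df F H z i ≤ 0 := by
  by_cases hi : (i : ℕ) < n
  · exact (h.Ggen_neg_of_eq_one hi (hzi.trans (uboundGen_of_lt hi))).le
  · rw [Ggen_of_le (not_lt.1 hi), hzi, h.mul_uboundGen_of_le (not_lt.1 hi)]
    linarith [h.add_apply_le_onevec (not_lt.1 hi) fun j hj => le_one_of_mem_DbarGen hz hj]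

theorem mem_DbarGen_of_isSolution (h : GenHyp n Df F H) {z : ℝ → Fin N → ℝ}
    (hz : IsSolution (Ggen n Df F H) z) (hz0 : z 0 ∈ DbarGen n Df F H) {t : ℝ} (ht : 0 ≤ t) :
    z t ∈ DbarGen n Df F H := by
  rw [DbarGen_eq_Icc] at hz0 ⊢
  refine mem_Icc_of_hasDerivAt_of_inward (fun x hx i hxi => h.Ggen_nonneg_of_eq_zero hx.1 hxi)
    (fun x hx i hxi => h.Ggen_nonpos_of_eq_uboundGen (DbarGen_eq_Icc ▸ hx) hxi)
    h.uboundGen_nonneg h.contDiff_Ggen.locallyLipschitz hz hz0 ht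

theorem neg_mul_le_Ggen (h : GenHyp n Df F H) (hz : z ∈ DbarGen n Df F H) (i : Fin N) :
    -(Df i i * z i) ≤ Ggen n Df F H z i := by
  have hFH := h.add_apply_nonneg (fun j => (hz j).1) i
  by_cases hi : (i : ℕ) < n
  · rw [Ggen_of_lt hi]
    nlinarith [le_one_of_mem_DbarGen hz hi]
  · rw [Ggen_of_le (not_lt.1 hi)]
    linarith

theorem exists_Ggen_le_mul_sub_uboundGen (h : GenHyp n Df F H) (i : Fin N) :
    ∃ K, ∀ z ∈ DbarGen n Df F H, Ggen n Df F H z i ≤ K * (uboundGen n Df F H i - z i) := by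
  by_cases hi : (i : ℕ) < n
  · refine ⟨F (uboundGen n Df F H) i + H (uboundGen n Df F H) i, fun z hz => ?_⟩
    have hFH : F z i + H z i ≤ F (uboundGen n Df F H) i + H (uboundGen n Df F H) i :=
      h.monotone_add (fun j => (hz j).2) i
    rw [Ggen_of_lt hi, uboundGen_of_lt hi]
    nlinarith [le_one_of_mem_DbarGen hz hi, (hz i).1, h.dPos i]
  · refine ⟨Df i i, fun z hz => ?_⟩
    rw [Ggen_of_le (not_lt.1 hi), mul_sub, h.mul_uboundGen_of_le (not_lt.1 hi)]
    linarith [h.add_apply_le_onevec (not_lt.1 hi) fun j hj => le_one_of_mem_DbarGen hz hj]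

theorem mem_DintGen_of_isSolution (h : GenHyp n Df F H) {z : ℝ → Fin N → ℝ}
    (hz : IsSolution (Ggen n Df F H) z) (hbar : ∀ t, 0 ≤ t → z t ∈ DbarGen n Df F H)
    (hz0 : z 0 ∈ DintGen n Df F H) {t : ℝ} (ht : 0 ≤ t) : z t ∈ DintGen n Df F H := by
  intro i
  have hzi : ∀ s ∈ Icc 0 t, HasDerivAt (fun s => z s i) (Ggen n Df F H (z s) i) s :=
    fun s hs => hasDerivAt_pi.1 (hz s hs.1) i
  obtain ⟨K, hK⟩ := h.exists_Ggen_le_mul_sub_uboundGen i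
  refine ⟨pos_of_neg_mul_le_deriv ht hzi (fun s hs => h.neg_mul_le_Ggen (hbar s hs.1) i)
    (hz0 i).1, sub_pos.1 ?_⟩
  exact pos_of_neg_mul_le_deriv (f := fun s => uboundGen n Df F H i - z s i) (K := K) ht
    (fun s hs => (hzi s hs).const_sub _) (fun s hs => by linarith [hK _ (hbar s hs.1)])
    (sub_pos.2 (hz0 i).2)

theorem apply_eq_zero_of_equilibrium_of_edge (h : GenHyp n Df F H) (hz : 0 ≤ z)
    (heq : Ggen n Df F H z = 0) {j : Fin N} (hzi : z i = 0)
    (hij : ∀ p, 0 < fderiv ℝ F p (Pi.single j 1) i) : z j = 0 := by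
  have hFH : F z i + H z i = 0 := by
    have := congrFun heq i
    by_cases hi : (i : ℕ) < n
    · simpa [Ggen_of_lt hi, hzi] using this
    · simpa [Ggen_of_le (not_lt.1 hi), hzi] using this
  have hH : H 0 i ≤ H z i := h.monotone_H hz i
  rw [h.hZero, Pi.zero_apply] at hH
  by_contra hzj
  have hlt := apply_lt_apply_of_fderiv_pos h.differentiable_F h.fMono hz
    (lt_of_le_of_ne (hz j) (Ne.symm hzj)) hij
  simp only [h.fZero, Pi.zero_apply] at hlt
  linarith

theorem lt_of_fderiv_F_pos (h : GenHyp n Df F H) (hi : n ≤ (i : ℕ)) {j : Fin N}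
    (hij : ∀ p, 0 < fderiv ℝ F p (Pi.single j 1) i) : (j : ℕ) < n := by
  by_contra hj
  have hlt := apply_lt_apply_of_fderiv_pos h.differentiable_F h.fMono (a := 0)
    (b := Pi.single j 1) (Pi.single_nonneg.2 zero_le_one) (by simp) hij
  refine hlt.ne (h.fDep i hi _ _ fun l hl => ?_)
  rw [Pi.single_eq_of_ne (by rintro rfl; exact hj hl), Pi.zero_apply]

theorem apply_ne_uboundGen_of_equilibrium (hn : 0 < n) (h : GenHyp n Df F H)
    (hz : z ∈ DbarGen n Df F H) (heq : Ggen n Df F H z = 0) (hi : n ≤ (i : ℕ)) :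
    z i ≠ uboundGen n Df F H i := by
  intro hzi
  obtain ⟨E, -, hconn, hEpos⟩ := h.edgeHyp
  have hi0 : i ≠ ⟨0, by omega⟩ := Fin.ne_of_val_ne (by simp only; omega)
  obtain ⟨r, k, hk0, hkr, hk⟩ := hconn i _ hi0
  have hr : 0 < r := Nat.pos_of_ne_zero (by rintro rfl; exact hi0 (hk0.symm.trans hkr))
  have hpos : ∀ p, 0 < fderiv ℝ F p (Pi.single (k 1) 1) i := fun p => hEpos p _ (hk0 ▸ hk 0 hr)
  have hk1 : ((k 1 : Fin N) : ℕ) < n := h.lt_of_fderiv_F_pos hi hpos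
  have hzk1 : z (k 1) < 1 := (le_one_of_mem_DbarGen hz hk1).lt_of_ne fun h1 =>
    (h.Ggen_neg_of_eq_one hk1 h1).ne (congrFun heq _)
  have hle : z ≤ fillOnes n z := le_fillOnes fun j hj => le_one_of_mem_DbarGen hz hj
  have hF : F z i < F (fillOnes n z) i := apply_lt_apply_of_fderiv_pos h.differentiable_F
    h.fMono hle (by simpa [fillOnes, hk1] using hzk1) hpos
  have hG := congrFun heq i
  rw [Ggen_of_le hi, hzi, h.mul_uboundGen_of_le hi, ← h.add_apply_fillOnes hi z,
    Pi.zero_apply] at hG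
  linarith [h.monotone_H hle i]

theorem eq_zero_of_equilibrium_of_not_mem_DintGen (hn : 0 < n) (h : GenHyp n Df F H)
    (hz : z ∈ DbarGen n Df F H) (hnot : z ∉ DintGen n Df F H) (heq : Ggen n Df F H z = 0) :
    z = 0 := by
  obtain ⟨i, hi⟩ : ∃ i, z i = 0 ∨ z i = uboundGen n Df F H i := by
    by_contra! hall
    exact hnot fun i => ⟨(hz i).1.lt_of_ne' (hall i).1, (hz i).2.lt_of_ne (hall i).2⟩
  rcases hi with hzi | hzi
  · obtain ⟨E, -, hconn, hEpos⟩ := h.edgeHyp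
    funext j
    rcases eq_or_ne i j with rfl | hij
    · exact hzi
    obtain ⟨r, k, rfl, rfl, hk⟩ := hconn i j hij
    exact apply_of_path (fun i j hij hzi => h.apply_eq_zero_of_equilibrium_of_edge
      (fun l => (hz l).1) heq hzi fun p => hEpos p _ hij) hk hzi
  · exfalso
    by_cases hin : (i : ℕ) < n
    · exact (h.Ggen_neg_of_eq_one hin (hzi.trans (uboundGen_of_lt hin))).ne (congrFun heq i)
    · exact h.apply_ne_uboundGen_of_equilibrium hn hz heq (not_lt.1 hin) hzi

end GenHyp

end SIWS

/-- general properties of the general SIWS model: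
(i) `D̄` is positively invariant; (ii) `𝐃` is positively invariant;
(iii) the origin is an equilibrium and is the only equilibrium on the
boundary of `𝐃`. -/
theorem stmt15 (n m : ℕ) (hn : 0 < n)
    (Df : Matrix (Fin (n + m)) (Fin (n + m)) ℝ)
    (F H : (Fin (n + m) → ℝ) → (Fin (n + m) → ℝ))
    (hgen : GenHyp n Df F H) :
    (∀ z : ℝ → Fin (n + m) → ℝ, IsSolution (Ggen n Df F H) z →
        z 0 ∈ DbarGen n Df F H → ∀ t : ℝ, 0 ≤ t → z t ∈ DbarGen n Df F H) ∧
    (∀ z : ℝ → Fin (n + m) → ℝ, IsSolution (Ggen n Df F H) z →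
        z 0 ∈ DintGen n Df F H → ∀ t : ℝ, 0 ≤ t → z t ∈ DintGen n Df F H) ∧
    Ggen n Df F H 0 = 0 ∧
    (∀ zs ∈ DbarGen n Df F H, zs ∉ DintGen n Df F H →
        Ggen n Df F H zs = 0 → zs = 0) := by
  have hbar : ∀ z : ℝ → Fin (n + m) → ℝ, IsSolution (Ggen n Df F H) z →
      z 0 ∈ DbarGen n Df F H → ∀ t : ℝ, 0 ≤ t → z t ∈ DbarGen n Df F H :=
    fun z hz hz0 t ht => hgen.mem_DbarGen_of_isSolution hz hz0 ht
  refine ⟨hbar, fun z hz hz0 t ht => ?_, hgen.Ggen_zero,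
    fun zs hzs hnot heq => hgen.eq_zero_of_equilibrium_of_not_mem_DintGen hn hzs hnot heq⟩
  exact hgen.mem_DintGen_of_isSolution hz (hbar z hz (DintGen_subset_DbarGen hz0)) hz0 ht
end
end
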